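/- The assignment G ↦ N_G extends to an equivalence of categories between the category of groups and the full subcategory of the functor category FinTypeᵒᵖ ⥤ Type spanned by the functors satisfying the nerve condition. -/

import Mathlib

open CategoryTheory Opposite

/-- The map `φ_i : Fin 2 → Fin n` (with `n = m + 2`, `0 ≤ i ≤ n − 2`), `0 ↦ i`, `1 ↦ i + 1`,
as a morphism of `FintypeCat`. -/
def phiMap (m : ℕ) (i : Fin (m + 1)) :
    FintypeCat.of (Fin 2) ⟶ FintypeCat.of (Fin (m + 2)) :=
  FintypeCat.homMk fun j => ⟨i.1 + j.1, by omega⟩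

/-- A functor `N : FinTypeᵒᵖ → Type` satisfies the nerve condition if for every `n ≥ 2`
the map `(N(φ_0), …, N(φ_{n−2})) : N(Fin n) → N(Fin 2)^{n−1}` is a bijection and
`N(∅)`, `N(Fin 1)` are singletons. -/
def NerveCond (N : FintypeCat.{0}ᵒᵖ ⥤ Type) : Prop :=
  (∀ m : ℕ, Function.Bijective fun (x : N.obj (op (FintypeCat.of (Fin (m + 2)))))
      (i : Fin (m + 1)) => N.map (phiMap m i).op x) ∧
  (Nonempty (N.obj (op (FintypeCat.of (Fin 0)))) ∧
    Subsingleton (N.obj (op (FintypeCat.of (Fin 0))))) ∧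
  (Nonempty (N.obj (op (FintypeCat.of (Fin 1)))) ∧
    Subsingleton (N.obj (op (FintypeCat.of (Fin 1)))))

/-- The value of the symmetric nerve of a group `G` on a set `S`:
`{g : S × S → G | g(i,i) = 1, g(i,j)g(j,k) = g(i,k)}`. -/
def NerveSet (G : Type) [Group G] (S : Type) : Type :=
  {g : S × S → G // (∀ i, g (i, i) = 1) ∧ ∀ i j k, g (i, j) * g (j, k) = g (i, k)}

/-- The symmetric nerve `N_G : FinTypeᵒᵖ → Type` of a group `G`. -/
def groupNerve (G : Type) [Group G] : FintypeCat.{0}ᵒᵖ ⥤ Type where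
  obj S := NerveSet G S.unop
  map f := TypeCat.ofHom fun x => ⟨fun p => x.1 (f.unop p.1, f.unop p.2),
    ⟨fun i => x.2.1 _, fun i j k => x.2.2 _ _ _⟩⟩

/-!
A cocycle on `Fin (n + 1)` is determined by its `n` consecutive values `g (i, i + 1)`, and any
values occur (take quotients of partial products); this is the nerve condition for `N_G`, and it
also shows that a natural transformation `N_G ⟶ N_H` is determined by a map `G → H`, which is
multiplicative by the cocycle identity on `Fin 3`.

Conversely, if `N` satisfies the nerve condition, `N(Fin 2)` is a group: `a * b` is the edge
`(0, 2)` of the unique element of `N(Fin 3)` with edges `a` and `b`, the unit is the (unique)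
degenerate edge and the inverse reverses an edge. The cocycle identity `e(s,t) e(t,u) = e(s,u)`
for the edges of any `x ∈ N(S)` gives all the group axioms at once, and recording all edges
defines `N ⟶ N_{N(Fin 2)}`, bijective on every `Fin n` by the nerve condition.
-/

namespace NerveSet

variable {G : Type} [Group G]

instance (S : Type) : Nonempty (NerveSet G S) :=
  ⟨⟨fun _ => 1, fun _ => rfl, fun _ _ _ => one_mul 1⟩⟩

instance (S : Type) [Subsingleton S] : Subsingleton (NerveSet G S) :=
  ⟨fun g g' => Subtype.ext <| funext fun ⟨i, j⟩ => by
    rw [Subsingleton.elim j i, g.2.1, g'.2.1]⟩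

lemma val_eq_inv_mul {S : Type} (g : NerveSet G S) (o i j : S) :
    g.1 (i, j) = (g.1 (o, i))⁻¹ * g.1 (o, j) := by
  rw [← g.2.2 o i j, inv_mul_cancel_left]

def consec {n : ℕ} (g : NerveSet G (Fin (n + 1))) (i : Fin n) : G :=
  g.1 (i.castSucc, i.succ)

lemma ext_of_consec {n : ℕ} {g g' : NerveSet G (Fin (n + 1))} (h : consec g = consec g') :
    g = g' := by
  have row (k : Fin (n + 1)) : g.1 (0, k) = g'.1 (0, k) := by
    induction k using Fin.induction with
    | zero => rw [g.2.1, g'.2.1]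
    | succ i ih =>
      rw [← g.2.2 0 i.castSucc, ← g'.2.2 0 i.castSucc, ih]
      exact congrArg _ (congrFun h i)
  exact Subtype.ext <| funext fun ⟨i, j⟩ => by
    rw [val_eq_inv_mul g 0, val_eq_inv_mul g' 0, row i, row j]

def ofPartialProd {n : ℕ} (a : Fin n → G) : NerveSet G (Fin (n + 1)) :=
  ⟨fun p => (Fin.partialProd a p.1)⁻¹ * Fin.partialProd a p.2,
    fun _ => inv_mul_cancel _, fun _ _ _ => by group⟩

lemma consec_ofPartialProd {n : ℕ} (a : Fin n → G) : consec (ofPartialProd a) = a :=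
  funext (Fin.partialProd_right_inv a)

def equivConsec (n : ℕ) : NerveSet G (Fin (n + 1)) ≃ (Fin n → G) where
  toFun := consec
  invFun := ofPartialProd
  left_inv _ := ext_of_consec (consec_ofPartialProd _)
  right_inv := consec_ofPartialProd

def finTwoEquiv : NerveSet G (Fin 2) ≃ G :=
  (equivConsec 1).trans (Equiv.funUnique (Fin 1) G)

end NerveSet

def pairMap {S : FintypeCat} (s t : S) : FintypeCat.of (Fin 2) ⟶ S :=
  FintypeCat.homMk ![s, t]

lemma phiMap_eq_pairMap (m : ℕ) (i : Fin (m + 1)) :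
    phiMap m i = pairMap (S := FintypeCat.of (Fin (m + 2))) i.castSucc i.succ := by
  ext j
  fin_cases j <;> rfl

lemma pairMap_comp {S T : FintypeCat} (s t : S) (f : S ⟶ T) :
    pairMap s t ≫ f = pairMap (f s) (f t) := by
  ext j
  fin_cases j <;> rfl

section Edge

variable {N : FintypeCat.{0}ᵒᵖ ⥤ Type}

def edge {S : FintypeCat} (x : N.obj (op S)) (s t : S) : N.obj (op (FintypeCat.of (Fin 2))) :=
  N.map (pairMap s t).op x

lemma edge_map {S T : FintypeCat} (f : S ⟶ T) (x : N.obj (op T)) (s t : S) :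
    edge (N.map f.op x) s t = edge x (f s) (f t) := by
  rw [edge, edge, ← pairMap_comp, op_comp, Functor.map_comp_apply]

lemma map_phiMap_op {m : ℕ} (x : N.obj (op (FintypeCat.of (Fin (m + 2))))) (i : Fin (m + 1)) :
    N.map (phiMap m i).op x = edge x i.castSucc i.succ := by
  rw [phiMap_eq_pairMap, edge]

lemma edge_zero_one (a : N.obj (op (FintypeCat.of (Fin 2)))) : edge a 0 1 = a := by
  rw [edge, show pairMap (S := FintypeCat.of (Fin 2)) 0 1 = 𝟙 _ by ext j; fin_cases j <;> rfl,
    op_id, Functor.map_id_apply]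

lemma edge_app {M : FintypeCat.{0}ᵒᵖ ⥤ Type} (η : N ⟶ M) {S : FintypeCat} (x : N.obj (op S))
    (s t : S) : edge (η.app (op S) x) s t = η.app _ (edge x s t) :=
  (NatTrans.naturality_apply η (pairMap s t).op x).symm

end Edge

section GroupNerve

variable {G : Type} [Group G]

lemma finTwoEquiv_edge {S : FintypeCat} (x : (groupNerve G).obj (op S)) (s t : S) :
    NerveSet.finTwoEquiv (edge x s t) = x.1 (s, t) :=
  rfl

variable (G) in
lemma groupNerve_nerveCond : NerveCond (groupNerve G) := by
  refine ⟨fun m => ?_, ⟨inferInstanceAs (Nonempty (NerveSet G (Fin 0))),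
      inferInstanceAs (Subsingleton (NerveSet G (Fin 0)))⟩,
    ⟨inferInstanceAs (Nonempty (NerveSet G (Fin 1))),
      inferInstanceAs (Subsingleton (NerveSet G (Fin 1)))⟩⟩
  let e := Equiv.piCongrRight fun _ : Fin (m + 1) => (NerveSet.finTwoEquiv (G := G))
  have h : ⇑e ∘ (fun x i => (groupNerve G).map (phiMap m i).op x) = NerveSet.consec := by
    funext x i
    exact congrArg NerveSet.finTwoEquiv (map_phiMap_op x i)
  exact (e.bijective.of_comp_iff' _).mp (h ▸ (NerveSet.equivConsec (m + 1)).bijective)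

end GroupNerve

section NerveFunctor

variable {G H : Type} [Group G] [Group H]

lemma edge_eq_finTwoEquiv_symm {S : FintypeCat} (x : (groupNerve G).obj (op S)) (s t : S) :
    edge x s t = NerveSet.finTwoEquiv.symm (x.1 (s, t)) :=
  NerveSet.finTwoEquiv.eq_symm_apply.mpr (finTwoEquiv_edge x s t)

def groupNerveMap (f : G →* H) : groupNerve G ⟶ groupNerve H where
  app S := TypeCat.ofHom fun x : NerveSet G S.unop => ⟨fun p => f (x.1 p),
    fun i => (congrArg f (x.2.1 i)).trans (map_one f),
    fun i j k => (map_mul f _ _).symm.trans (congrArg f (x.2.2 i j k))⟩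
  naturality _ _ _ := rfl

variable (η : groupNerve G ⟶ groupNerve H)

def nerveHomFun (a : G) : H :=
  NerveSet.finTwoEquiv (η.app (op (FintypeCat.of (Fin 2))) (NerveSet.finTwoEquiv.symm a))

lemma app_val_eq_nerveHomFun {S : FintypeCat} (x : (groupNerve G).obj (op S)) (s t : S) :
    (η.app (op S) x).1 (s, t) = nerveHomFun η (x.1 (s, t)) := by
  rw [← finTwoEquiv_edge, edge_app, edge_eq_finTwoEquiv_symm x]
  rfl

lemma nerveHomFun_mul (a b : G) : nerveHomFun η (a * b) = nerveHomFun η a * nerveHomFun η b := by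
  let x : (groupNerve G).obj (op (FintypeCat.of (Fin 3))) := (NerveSet.equivConsec 2).symm ![a, b]
  have hx := congrFun ((NerveSet.equivConsec 2).apply_symm_apply ![a, b])
  have h01 : x.1 (0, 1) = a := hx 0
  have h12 : x.1 (1, 2) = b := hx 1
  have h02 : x.1 (0, 2) = a * b := by rw [← x.2.2 0 1 2, h01, h12]
  have := (η.app _ x).2.2 0 1 2
  rwa [app_val_eq_nerveHomFun, app_val_eq_nerveHomFun, app_val_eq_nerveHomFun, h01, h12, h02,
    eq_comm] at this

def homOfNerveHom : G →* H := MonoidHom.mk' (nerveHomFun η) (nerveHomFun_mul η)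

lemma groupNerveMap_homOfNerveHom : groupNerveMap (homOfNerveHom η) = η := by
  ext S x
  exact Subtype.ext <| funext fun ⟨s, t⟩ => (app_val_eq_nerveHomFun η x s t).symm

lemma homOfNerveHom_groupNerveMap (f : G →* H) : homOfNerveHom (groupNerveMap f) = f := by
  ext a
  exact congrArg f (NerveSet.finTwoEquiv.apply_symm_apply a)

end NerveFunctor

def groupNerveFunctor : GrpCat.{0} ⥤ (FintypeCat.{0}ᵒᵖ ⥤ Type) where
  obj G := groupNerve G
  map f := groupNerveMap f.hom

def groupNerveFunctor.fullyFaithful : groupNerveFunctor.FullyFaithful where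
  preimage η := GrpCat.ofHom (homOfNerveHom η)
  map_preimage := groupNerveMap_homOfNerveHom
  preimage_map f := GrpCat.hom_ext (homOfNerveHom_groupNerveMap f.hom)

section NerveGroup

variable {N : FintypeCat.{0}ᵒᵖ ⥤ Type} [hN : Fact (NerveCond N)]

noncomputable def edgesEquiv (m : ℕ) :
    N.obj (op (FintypeCat.of (Fin (m + 2)))) ≃ (Fin (m + 1) → N.obj (op (FintypeCat.of (Fin 2)))) :=
  Equiv.ofBijective (fun x i => edge x i.castSucc i.succ) (by
    simpa only [map_phiMap_op] using hN.out.1 m)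

lemma edgesEquiv_apply {m : ℕ} (x : N.obj (op (FintypeCat.of (Fin (m + 2))))) (i : Fin (m + 1)) :
    edgesEquiv m x i = edge x i.castSucc i.succ :=
  rfl

noncomputable instance : One (N.obj (op (FintypeCat.of (Fin 2)))) :=
  ⟨edge hN.out.2.2.1.some (0 : Fin 1) 0⟩

noncomputable instance : Mul (N.obj (op (FintypeCat.of (Fin 2)))) :=
  ⟨fun a b => edge ((edgesEquiv 1).symm ![a, b]) 0 2⟩

/-- Every degenerate edge factors through `N(Fin 1)`, which is a point. -/
lemma edge_self {S : FintypeCat} (x : N.obj (op S)) (s : S) : edge x s s = 1 := by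
  have : Subsingleton (N.obj (op (FintypeCat.of (Fin 1)))) := hN.out.2.2.2
  let p : FintypeCat.of (Fin 1) ⟶ S := FintypeCat.homMk fun _ => s
  calc edge x s s = edge (N.map p.op x) 0 0 := (edge_map p x 0 0).symm
    _ = 1 := congrArg (fun z : N.obj (op (FintypeCat.of (Fin 1))) => edge z (0 : Fin 1) 0)
        (Subsingleton.elim _ _)

lemma edge_mul_edge {S : FintypeCat} (x : N.obj (op S)) (s t u : S) :
    edge x s t * edge x t u = edge x s u := by
  let f : FintypeCat.of (Fin 3) ⟶ S := FintypeCat.homMk ![s, t, u]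
  let y := N.map f.op x
  have hy : (edgesEquiv 1).symm ![edge x s t, edge x t u] = y := by
    refine (edgesEquiv 1).symm_apply_eq.mpr (funext fun i => ?_)
    rw [edgesEquiv_apply, edge_map]
    fin_cases i <;> rfl
  calc edge x s t * edge x t u = edge y 0 2 :=
        congrArg (fun z : N.obj (op (FintypeCat.of (Fin 3))) => edge z (0 : Fin 3) 2) hy
    _ = edge x s u := edge_map f x 0 2

noncomputable instance : Group (N.obj (op (FintypeCat.of (Fin 2)))) where
  inv a := edge a 1 0
  mul_assoc a b c := by
    obtain ⟨x, hx⟩ := (edgesEquiv 2).surjective ![a, b, c]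
    have h01 : edge x 0 1 = a := congrFun hx 0
    have h12 : edge x 1 2 = b := congrFun hx 1
    have h23 : edge x 2 3 = c := congrFun hx 2
    rw [← h01, ← h12, ← h23, edge_mul_edge, edge_mul_edge, edge_mul_edge, edge_mul_edge]
  one_mul a := by
    have h := edge_mul_edge a 0 0 1
    rwa [edge_self, edge_zero_one] at h
  mul_one a := by
    have h := edge_mul_edge a 0 1 1
    rwa [edge_self, edge_zero_one] at h
  inv_mul_cancel a := by
    have h := edge_mul_edge a 1 0 1
    rw [edge_self, edge_zero_one] at h
    exact h

noncomputable def toGroupNerve : N ⟶ groupNerve (N.obj (op (FintypeCat.of (Fin 2)))) where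
  app S := TypeCat.ofHom fun x =>
    ⟨fun p => edge x p.1 p.2, fun s => edge_self x s, edge_mul_edge x⟩
  naturality S T f := by
    ext x
    exact Subtype.ext (funext fun p => edge_map f.unop x p.1 p.2)

lemma toGroupNerve_app_bijective_fin (n : ℕ) :
    Function.Bijective (toGroupNerve (N := N) |>.app (op (FintypeCat.of (Fin n)))) := by
  match n, hN.out with
  | 0, ⟨_, ⟨⟨x⟩, _⟩, _⟩ =>
    exact ⟨fun _ _ _ => Subsingleton.elim _ _,
      fun _ => ⟨x, Subsingleton.elim (α := NerveSet _ (Fin 0)) _ _⟩⟩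
  | 1, ⟨_, _, ⟨⟨x⟩, _⟩⟩ =>
    exact ⟨fun _ _ _ => Subsingleton.elim _ _,
      fun _ => ⟨x, Subsingleton.elim (α := NerveSet _ (Fin 1)) _ _⟩⟩
  | m + 2, _ =>
    exact ((NerveSet.equivConsec (m + 1)).bijective.of_comp_iff' _).mp (edgesEquiv m).bijective

instance : IsIso (toGroupNerve (N := N)) := by
  have (S : FintypeCat.{0}ᵒᵖ) : IsIso (toGroupNerve (N := N) |>.app S) := by
    let e := FintypeCat.equivEquivIso (A := FintypeCat.of (Fin _)) (Finite.equivFin S.unop).symm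
    rw [NatTrans.isIso_app_iff_of_iso _ e.op, isIso_iff_bijective]
    exact toGroupNerve_app_bijective_fin _
  exact NatIso.isIso_of_isIso_app _

end NerveGroup

abbrev groupNerveFunctor.lift : GrpCat.{0} ⥤ ObjectProperty.FullSubcategory NerveCond :=
  ObjectProperty.lift _ groupNerveFunctor fun G => groupNerve_nerveCond G

def groupNerveFunctor.fullyFaithfulLift : groupNerveFunctor.lift.FullyFaithful :=
  .ofCompFaithful (G := ObjectProperty.ι _) groupNerveFunctor.fullyFaithful

instance : groupNerveFunctor.lift.EssSurj where
  mem_essImage Y :=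
    have : Fact (NerveCond Y.obj) := ⟨Y.property⟩
    ⟨GrpCat.of (Y.obj.obj (op (FintypeCat.of (Fin 2)))),
      ⟨ObjectProperty.isoMk _ (asIso toGroupNerve).symm⟩⟩

theorem groupNerve_equivalence :
    ∃ E : GrpCat.{0} ≌ CategoryTheory.ObjectProperty.FullSubcategory
        (fun N : FintypeCat.{0}ᵒᵖ ⥤ Type => NerveCond N),
      ∀ G : GrpCat.{0}, (E.functor.obj G).obj = groupNerve G := by
  have := groupNerveFunctor.fullyFaithfulLift.full
  have := groupNerveFunctor.fullyFaithfulLift.faithful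
  have : groupNerveFunctor.lift.IsEquivalence := {}
  exact ⟨groupNerveFunctor.lift.asEquivalence, fun _ => rfl⟩
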